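/- arXiv:math/9803119 — 2 statements merged into one kernel-verified Lean document; each statement's English description precedes it below -/
import Mathlib

section
/- For |z| < 1, the logarithm of the Gamma function satisfies log Γ(1+z) = -γ z + Σ_{i=2}^∞ (-1)^i ζ(i) z^i / i, where γ is the Euler–Mascheroni constant and ζ is the Riemann zeta function. -/
open Complex Filter Topology Real

lemma lgs_tail {w : ℂ} (hw : ‖w‖ < 1) :
    HasSum (fun i : ℕ => (-1) ^ (i + 2) * w ^ (i + 2) / (i + 2)) (w - Complex.log (1 + w)) := by
  have h := Complex.hasSum_taylorSeries_log hw
  have h2 : HasSum (fun n : ℕ => (-1) ^ (n + 2 + 1) * w ^ (n + 2) / (↑(n + 2) : ℂ))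
      (Complex.log (1 + w) - ∑ i ∈ Finset.range 2, (-1) ^ (i + 1) * w ^ i / (i : ℂ)) := by
    rw [hasSum_nat_add_iff (f := fun n : ℕ => (-1) ^ (n + 1) * w ^ n / (n : ℂ)) 2]
    simpa using h
  have h3 : (∑ i ∈ Finset.range 2, (-1) ^ (i + 1) * w ^ i / (i : ℂ)) = w := by
    simp [Finset.sum_range_succ]
  rw [h3] at h2
  have h4 := h2.neg
  rw [neg_sub] at h4
  convert h4 using 2 with i
  · rfl
  push_cast
  ring

noncomputable def lgsF (z : ℂ) (k : ℕ) : ℂ := z / (k + 1) - Complex.log (1 + z / (k + 1))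

lemma lgs_norm_div (z : ℂ) (k : ℕ) : ‖z / ((k : ℂ) + 1)‖ = ‖z‖ / (k + 1) := by
  rw [norm_div]
  congr 1
  have : ((k : ℂ) + 1) = ((k + 1 : ℝ) : ℂ) := by push_cast; ring
  rw [this, Complex.norm_real, Real.norm_eq_abs, abs_of_pos (by positivity)]

lemma lgs_norm_div_le (z : ℂ) (k : ℕ) : ‖z / ((k : ℂ) + 1)‖ ≤ ‖z‖ := by
  rw [lgs_norm_div]
  apply div_le_self (norm_nonneg z)
  norm_num

lemma lgs_norm_f_le (z : ℂ) (hz : ‖z‖ < 1) (k : ℕ) :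
    ‖lgsF z k‖ ≤ (‖z‖ ^ 2 * (1 - ‖z‖)⁻¹ / 2) * (1 / (k + 1 : ℝ) ^ 2) := by
  have hw : ‖z / ((k : ℂ) + 1)‖ < 1 := (lgs_norm_div_le z k).trans_lt hz
  have h := Complex.norm_log_one_add_sub_self_le hw
  rw [← norm_neg, neg_sub] at h
  refine h.trans ?_
  rw [lgs_norm_div]
  have h1 : (0:ℝ) < k + 1 := by positivity
  have h2 : (1 - ‖z‖ / (k + 1))⁻¹ ≤ (1 - ‖z‖)⁻¹ := by
    apply inv_anti₀ (by linarith)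
    have : ‖z‖ / (k + 1) ≤ ‖z‖ := div_le_self (norm_nonneg z) (by linarith)
    linarith
  calc (‖z‖ / (k + 1)) ^ 2 * (1 - ‖z‖ / (k + 1))⁻¹ / 2
      ≤ (‖z‖ / (k + 1)) ^ 2 * (1 - ‖z‖)⁻¹ / 2 := by gcongr
    _ = (‖z‖ ^ 2 * (1 - ‖z‖)⁻¹ / 2) * (1 / (k + 1 : ℝ) ^ 2) := by
        field_simp

lemma lgs_summable_f (z : ℂ) (hz : ‖z‖ < 1) : Summable (lgsF z) := by
  apply Summable.of_norm
  apply Summable.of_nonneg_of_le (fun k => norm_nonneg _) (lgs_norm_f_le z hz)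
  apply Summable.mul_left
  have := (summable_nat_add_iff 1).mpr (Real.summable_one_div_nat_pow.mpr (le_refl 2))
  convert this using 2 with k
  · rfl
  push_cast
  ring

-- HasSum for the zeta-shifted series
lemma lgs_hasSum_zeta_pow (m : ℕ) (hm : 2 ≤ m) :
    HasSum (fun k : ℕ => 1 / ((k : ℂ) + 1) ^ m) (riemannZeta m) := by
  have hsum : Summable (fun n : ℕ => 1 / (n : ℂ) ^ m) := by
    apply Summable.of_norm
    have : Summable (fun n : ℕ => 1 / (n : ℝ) ^ m) :=
      Real.summable_one_div_nat_pow.mpr (by omega)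
    apply this.congr
    intro n
    simp [norm_div, norm_pow]
  have h1 : HasSum (fun n : ℕ => 1 / (n : ℂ) ^ m) (riemannZeta m) := by
    rw [zeta_nat_eq_tsum_of_gt_one (by omega)]
    exact hsum.hasSum
  have h2 : HasSum (fun n : ℕ => 1 / (((n : ℂ)) + 1) ^ m) (riemannZeta m) := by
    have h3 : HasSum (fun n : ℕ => 1 / (((n + 1 : ℕ) : ℂ)) ^ m) (riemannZeta m) := by
      rw [hasSum_nat_add_iff (f := fun n : ℕ => 1 / (n : ℂ) ^ m) 1]
      have : (∑ i ∈ Finset.range 1, 1 / (i : ℂ) ^ m) = 0 := by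
        simp [zero_pow (by omega : m ≠ 0)]
      rw [this, add_zero]
      exact h1
    exact h3.congr_fun (fun n => by push_cast; ring_nf)
  exact h2

lemma lgs_main_hasSum (z : ℂ) (hz : ‖z‖ < 1) :
    HasSum (fun i : ℕ => (-1) ^ (i + 2) * riemannZeta (i + 2) * z ^ (i + 2) / (i + 2))
      (∑' k, lgsF z k) := by
  set a : ℕ × ℕ → ℂ := fun p => (-1) ^ (p.2 + 2) * (z / (p.1 + 1)) ^ (p.2 + 2) / (p.2 + 2) with ha
  have hL1 : ∀ k : ℕ, HasSum (fun i => a (k, i)) (lgsF z k) := by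
    intro k
    simp only [ha, lgsF]
    exact lgs_tail ((lgs_norm_div_le z k).trans_lt hz)
  have hA : Summable (fun p => ‖a p‖) := by
    have hmaj : Summable (fun p : ℕ × ℕ => (1 / ((p.1 : ℝ) + 1) ^ 2) * ‖z‖ ^ (p.2 + 2)) := by
      apply Summable.mul_of_nonneg (f := fun k : ℕ => 1 / ((k : ℝ) + 1) ^ 2)
        (g := fun i : ℕ => ‖z‖ ^ (i + 2))
      · have := (summable_nat_add_iff 1).mpr (Real.summable_one_div_nat_pow.mpr (le_refl 2))
        apply this.congr
        intro k
        push_cast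
        ring
      · exact ((summable_geometric_of_lt_one (norm_nonneg z) hz).mul_left (‖z‖ ^ 2)).congr
          (fun i => by rw [← pow_add]; ring_nf)
      · intro k; positivity
      · intro i; positivity
    apply Summable.of_nonneg_of_le (fun p => norm_nonneg _) ?_ hmaj
    rintro ⟨k, i⟩
    have hk1 : (0:ℝ) < (k:ℝ) + 1 := by positivity
    have hknorm : ‖((k : ℂ) + 1)‖ = (k : ℝ) + 1 := by
      have : ((k : ℂ) + 1) = ((k + 1 : ℝ) : ℂ) := by push_cast; ring
      rw [this, Complex.norm_real, Real.norm_eq_abs, abs_of_pos (by positivity)]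
    simp only [ha, norm_div, norm_mul, norm_pow, norm_neg, norm_one, one_pow, one_mul]
    rw [hknorm]
    have hden : (1:ℝ) ≤ ‖((i : ℂ) + 2)‖ := by
      have : ((i : ℂ) + 2) = ((i + 2 : ℝ) : ℂ) := by push_cast; ring
      rw [this, Complex.norm_real, Real.norm_eq_abs, abs_of_pos (by positivity)]
      linarith [Nat.cast_nonneg (α := ℝ) i]
    calc (‖z‖ / ((k:ℝ) + 1)) ^ (i + 2) / ‖((i : ℂ) + 2)‖
        ≤ (‖z‖ / ((k:ℝ) + 1)) ^ (i + 2) / 1 := by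
          gcongr
      _ = ‖z‖ ^ (i + 2) / ((k:ℝ) + 1) ^ (i + 2) := by rw [div_pow]; ring
      _ ≤ ‖z‖ ^ (i + 2) / ((k:ℝ) + 1) ^ 2 := by
          gcongr
          · linarith [Nat.cast_nonneg (α := ℝ) k]
          · omega
      _ = (1 / ((k : ℝ) + 1) ^ 2) * ‖z‖ ^ (i + 2) := by ring
  have hAs : Summable a := Summable.of_norm hA
  have hT : HasSum a (∑' p, a p) := hAs.hasSum
  have hswap : HasSum (fun p : ℕ × ℕ => a (p.2, p.1)) (∑' p, a p) :=
    ((Equiv.prodComm ℕ ℕ).hasSum_iff).mpr hT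
  have hL5 : ∀ i : ℕ, HasSum (fun k => a (k, i))
      ((-1) ^ (i + 2) * riemannZeta (i + 2) * z ^ (i + 2) / (i + 2)) := by
    intro i
    have h := (lgs_hasSum_zeta_pow (i + 2) (by omega)).mul_left
      ((-1) ^ (i + 2) * z ^ (i + 2) / (i + 2))
    have hcast : ((i + 2 : ℕ) : ℂ) = (i : ℂ) + 2 := by push_cast; ring
    rw [hcast] at h
    convert h using 1
    · rfl
    · funext k
      simp only [ha]
      rw [div_pow]
      ring
    · ring
  have := hswap.prod_fiberwise hL5
  have hfs : HasSum (lgsF z) (∑' p, a p) := hT.prod_fiberwise hL1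
  rwa [hfs.tsum_eq]

lemma lgs_norm_f_tail_le (z : ℂ) (hz : ‖z‖ < 1) (j : ℕ) :
    ‖lgsF z (j + 1)‖ ≤ 1 / ((j : ℝ) + 2) ^ 2 := by
  have hj2 : (0:ℝ) < (j:ℝ) + 2 := by positivity
  have hw : ‖z / (((j + 1 : ℕ) : ℂ) + 1)‖ = ‖z‖ / ((j:ℝ) + 2) := by
    rw [lgs_norm_div]; push_cast; ring_nf
  have hwle : ‖z / (((j + 1 : ℕ) : ℂ) + 1)‖ ≤ 1 / 2 := by
    rw [hw]
    rw [div_le_div_iff₀ hj2 (by norm_num)]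
    nlinarith [Nat.cast_nonneg (α := ℝ) j]
  have hwlt : ‖z / (((j + 1 : ℕ) : ℂ) + 1)‖ < 1 := hwle.trans_lt (by norm_num)
  have h := Complex.norm_log_one_add_sub_self_le hwlt
  rw [← norm_neg, neg_sub] at h
  have : lgsF z (j + 1) = z / (((j + 1 : ℕ) : ℂ) + 1)
      - Complex.log (1 + z / (((j + 1 : ℕ) : ℂ) + 1)) := rfl
  rw [this]
  refine h.trans ?_
  have hinv : (1 - ‖z / (((j + 1 : ℕ) : ℂ) + 1)‖)⁻¹ ≤ 2 := by
    rw [inv_le_comm₀ (by linarith) (by norm_num)]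
    linarith
  have hinv0 : 0 ≤ (1 - ‖z / (((j + 1 : ℕ) : ℂ) + 1)‖)⁻¹ := by
    apply inv_nonneg.mpr; linarith
  rw [hw] at hinv hinv0 ⊢
  have hzn := norm_nonneg z
  have hu : ‖z‖ / ((j:ℝ) + 2) ≤ 1 / ((j:ℝ) + 2) := by gcongr
  have hu0 : 0 ≤ ‖z‖ / ((j:ℝ) + 2) := div_nonneg hzn hj2.le
  have hv : (1 / ((j:ℝ) + 2)) ^ 2 = 1 / ((j:ℝ) + 2) ^ 2 := by
    rw [div_pow]; norm_num
  nlinarith [sq_nonneg (‖z‖ / ((j:ℝ) + 2)), mul_le_mul hu hu hu0 (by positivity : (0:ℝ) ≤ 1 / ((j:ℝ)+2))]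

lemma lgs_tail_sum_bound (z : ℂ) (hz : ‖z‖ < 1) :
    ‖∑' j : ℕ, lgsF z (j + 1)‖ ≤ π ^ 2 / 6 - 1 := by
  have hs := lgs_summable_f z hz
  have htail : Summable (fun j : ℕ => lgsF z (j + 1)) := (summable_nat_add_iff 1).mpr hs
  have hmaj : Summable (fun j : ℕ => 1 / ((j : ℝ) + 2) ^ 2) := by
    have := (summable_nat_add_iff 2).mpr (Real.summable_one_div_nat_pow.mpr (le_refl 2))
    apply this.congr
    intro j; push_cast; ring_nf
  have h1 : ‖∑' j : ℕ, lgsF z (j + 1)‖ ≤ ∑' j : ℕ, ‖lgsF z (j + 1)‖ :=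
    norm_tsum_le_tsum_norm htail.norm
  have h2 : ∑' j : ℕ, ‖lgsF z (j + 1)‖ ≤ ∑' j : ℕ, 1 / ((j : ℝ) + 2) ^ 2 :=
    Summable.tsum_le_tsum (lgs_norm_f_tail_le z hz) htail.norm hmaj
  have h3 : HasSum (fun j : ℕ => 1 / ((j : ℝ) + 2) ^ 2) (π ^ 2 / 6 - 1) := by
    have hb := hasSum_zeta_two
    have h4 : HasSum (fun n : ℕ => (1:ℝ) / ((n + 2 : ℕ) : ℝ) ^ 2)
        (π ^ 2 / 6 - ∑ i ∈ Finset.range 2, (1:ℝ) / (i : ℝ) ^ 2) := by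
      rw [hasSum_nat_add_iff (f := fun n : ℕ => (1:ℝ) / (n : ℝ) ^ 2) 2]
      simpa using hb
    have h5 : (∑ i ∈ Finset.range 2, (1:ℝ) / (i : ℝ) ^ 2) = 1 := by
      simp [Finset.sum_range_succ]
    rw [h5] at h4
    apply h4.congr_fun
    intro n; push_cast; ring_nf
  linarith [h1, h2, h3.tsum_eq.le, h3.tsum_eq.ge]

lemma lgs_im_bound (z : ℂ) (hz : ‖z‖ < 1) :
    |(-(Real.eulerMascheroniConstant : ℂ) * z + ∑' k, lgsF z k).im| < π := by
  set γ := Real.eulerMascheroniConstant with hγdef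
  have hs := lgs_summable_f z hz
  have hsplit : ∑' k, lgsF z k = lgsF z 0 + ∑' j, lgsF z (j + 1) := Summable.tsum_eq_zero_add hs
  have hf0 : lgsF z 0 = z - Complex.log (1 + z) := by
    simp [lgsF]
  have him : (-(γ : ℂ) * z + ∑' k, lgsF z k).im
      = (1 - γ) * z.im - (Complex.log (1 + z)).im + (∑' j, lgsF z (j + 1)).im := by
    rw [hsplit, hf0]
    simp [Complex.add_im, Complex.sub_im, Complex.mul_im, Complex.neg_im, Complex.ofReal_im,
      Complex.neg_re, Complex.ofReal_re]
    ring
  rw [him]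
  have h1 : |(1 - γ) * z.im| < 1 / 2 := by
    have hγ1 : 1 / 2 < γ := Real.one_half_lt_eulerMascheroniConstant
    have hγ2 : γ < 2 / 3 := Real.eulerMascheroniConstant_lt_two_thirds
    have hzim : |z.im| ≤ ‖z‖ := Complex.abs_im_le_norm z
    rw [abs_mul, abs_of_pos (by linarith : (0:ℝ) < 1 - γ)]
    nlinarith [abs_nonneg z.im]
  have h2 : |(Complex.log (1 + z)).im| ≤ π / 2 := by
    rw [Complex.log_im]
    apply Complex.abs_arg_le_pi_div_two_iff.mpr
    have : |z.re| ≤ ‖z‖ := Complex.abs_re_le_norm z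
    simp only [Complex.add_re, Complex.one_re]
    cases abs_le.mp this with
    | intro hl hr => linarith
  have h3 : |(∑' j, lgsF z (j + 1)).im| ≤ π ^ 2 / 6 - 1 := by
    refine (Complex.abs_im_le_norm _).trans ?_
    exact lgs_tail_sum_bound z hz
  have hpi1 : 3 < π := Real.pi_gt_three
  have hpi2 : π < 3.15 := by
    have := Real.pi_lt_d2
    norm_num at this ⊢
    linarith
  have habs := abs_add_le ((1 - γ) * z.im - (Complex.log (1 + z)).im) ((∑' j, lgsF z (j + 1)).im)
  have habs2 := abs_sub ((1 - γ) * z.im) ((Complex.log (1 + z)).im)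
  nlinarith [abs_nonneg ((1 - γ) * z.im)]

lemma lgs_ne (z : ℂ) (hz : ‖z‖ < 1) (k : ℕ) : (1 + z / ((k : ℂ) + 1)) ≠ 0 := by
  intro h
  have h1 : ‖z / ((k : ℂ) + 1)‖ < 1 := (lgs_norm_div_le z k).trans_lt hz
  have h2 : z / ((k:ℂ)+1) = -1 := by linear_combination h
  rw [h2] at h1
  simp at h1

lemma lgs_exp_partial (z : ℂ) (hz : ‖z‖ < 1) (m : ℕ) :
    Complex.exp (∑ k ∈ Finset.range m, lgsF z k)
      = Complex.exp (z * ∑ k ∈ Finset.range m, 1 / ((k : ℂ) + 1))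
        / ∏ k ∈ Finset.range m, (1 + z / ((k : ℂ) + 1)) := by
  have h1 : (∑ k ∈ Finset.range m, lgsF z k)
      = z * (∑ k ∈ Finset.range m, 1 / ((k : ℂ) + 1))
        - ∑ k ∈ Finset.range m, Complex.log (1 + z / ((k : ℂ) + 1)) := by
    rw [Finset.mul_sum, ← Finset.sum_sub_distrib]
    apply Finset.sum_congr rfl
    intro k _
    simp [lgsF]
    ring_nf
  rw [h1, Complex.exp_sub]
  congr 1
  rw [Complex.exp_sum]
  apply Finset.prod_congr rfl
  intro k _
  exact Complex.exp_log (lgs_ne z hz k)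

lemma lgs_gammaSeq_eq (z : ℂ) (hz : ‖z‖ < 1) (n : ℕ) :
    Complex.GammaSeq (1 + z) n
      = (n : ℂ) ^ ((1:ℂ) + z)
        / (((n:ℂ) + 1) * ∏ k ∈ Finset.range (n + 1), (1 + z / ((k : ℂ) + 1))) := by
  rw [Complex.GammaSeq]
  have hprod : (∏ j ∈ Finset.range (n + 1), ((1:ℂ) + z + j))
      = ((n + 1).factorial : ℂ) * ∏ k ∈ Finset.range (n + 1), (1 + z / ((k : ℂ) + 1)) := by
    have : ∀ j ∈ Finset.range (n + 1), ((1:ℂ) + z + j) = ((j:ℂ) + 1) * (1 + z / ((j:ℂ) + 1)) := by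
      intro j _
      have hj : ((j:ℂ) + 1) ≠ 0 := by
        intro h
        have : ((j:ℝ) + 1) = 0 := by exact_mod_cast congrArg Complex.re h
        nlinarith [Nat.cast_nonneg (α := ℝ) j]
      field_simp
      ring
    rw [Finset.prod_congr rfl this, Finset.prod_mul_distrib]
    congr 1
    calc ∏ x ∈ Finset.range (n+1), ((x:ℂ) + 1)
        = ∏ x ∈ Finset.range (n+1), ((x + 1 : ℕ) : ℂ) := by push_cast; rfl
      _ = (((∏ x ∈ Finset.range (n+1), (x+1)) : ℕ) : ℂ) := by rw [Nat.cast_prod]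
      _ = _ := by rw [Finset.prod_range_add_one_eq_factorial]
  rw [hprod]
  have hfac : ((n + 1).factorial : ℂ) = ((n:ℂ) + 1) * (n.factorial : ℂ) := by
    push_cast [Nat.factorial_succ]
    ring
  rw [hfac]
  have hfacne : (n.factorial : ℂ) ≠ 0 := Nat.cast_ne_zero.mpr n.factorial_ne_zero
  have hn1 : ((n:ℂ) + 1) ≠ 0 := by
    intro h
    have : ((n:ℝ) + 1) = 0 := by exact_mod_cast congrArg Complex.re h
    nlinarith [Nat.cast_nonneg (α := ℝ) n]
  by_cases hP : (∏ k ∈ Finset.range (n+1), (1 + z / ((k:ℂ)+1))) = 0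
  · rw [hP]
    simp
  · field_simp

lemma lgs_rn_tendsto :
    Tendsto (fun n : ℕ => ((harmonic (n+1) : ℝ) - Real.log n - Real.eulerMascheroniConstant))
      atTop (𝓝 0) := by
  have ha : Tendsto (fun n : ℕ => ((harmonic (n+1) : ℝ) - Real.log (n+1))) atTop
      (𝓝 Real.eulerMascheroniConstant) := by
    have := Real.tendsto_harmonic_sub_log.comp (tendsto_add_atTop_nat 1)
    convert this using 2 with n
    simp
  have hb : Tendsto (fun n : ℕ => Real.log ((n:ℝ)+1) - Real.log n) atTop (𝓝 0) := by
    have hc : Tendsto (fun n : ℕ => ((n:ℝ)+1)/n) atTop (𝓝 1) := by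
      have h0 : Tendsto (fun n : ℕ => 1 + 1/(n:ℝ)) atTop (𝓝 (1 + 0)) :=
        tendsto_const_nhds.add tendsto_one_div_atTop_nhds_zero_nat
      rw [add_zero] at h0
      apply h0.congr'
      filter_upwards [eventually_ge_atTop 1] with n hn
      have hn' : (0:ℝ) < n := by exact_mod_cast hn
      field_simp
    have := hc.log one_ne_zero
    rw [Real.log_one] at this
    apply this.congr'
    filter_upwards [eventually_ge_atTop 1] with n hn
    have hn' : (0:ℝ) < n := by exact_mod_cast hn
    rw [Real.log_div (by positivity) (by positivity)]
  have := (ha.add hb).sub (tendsto_const_nhds (x := Real.eulerMascheroniConstant))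
  rw [show Real.eulerMascheroniConstant + 0 - Real.eulerMascheroniConstant = 0 by ring] at this
  apply this.congr
  intro n
  ring

lemma lgs_exp (z : ℂ) (hz : ‖z‖ < 1) :
    Complex.exp (-(Real.eulerMascheroniConstant : ℂ) * z + ∑' k, lgsF z k)
      = Complex.Gamma (1 + z) := by
  set γ := Real.eulerMascheroniConstant with hγdef
  have hs := lgs_summable_f z hz
  set rn : ℕ → ℝ := fun n => (harmonic (n+1) : ℝ) - Real.log n - γ with hrn
  -- limit of LHS partial exponentials
  have hL : Tendsto (fun n : ℕ => Complex.exp (-(γ:ℂ)*z + ∑ k ∈ Finset.range (n+1), lgsF z k))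
      atTop (𝓝 (Complex.exp (-(γ:ℂ)*z + ∑' k, lgsF z k))) := by
    have h1 : Tendsto (fun m : ℕ => -(γ:ℂ)*z + ∑ k ∈ Finset.range m, lgsF z k) atTop
        (𝓝 (-(γ:ℂ)*z + ∑' k, lgsF z k)) :=
      tendsto_const_nhds.add hs.hasSum.tendsto_sum_nat
    exact (h1.cexp).comp (tendsto_add_atTop_nat 1)
  -- limit of RHS expression
  have hG : Tendsto (fun n : ℕ => Complex.GammaSeq (1+z) n * (((n:ℂ)+1)/(n:ℂ))
      * Complex.exp (z * ((rn n : ℝ) : ℂ))) atTop (𝓝 (Complex.Gamma (1+z))) := by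
    have t1 := Complex.GammaSeq_tendsto_Gamma (1+z)
    have t2 : Tendsto (fun n : ℕ => ((n:ℂ)+1)/(n:ℂ)) atTop (𝓝 1) := by
      have hr : Tendsto (fun n : ℕ => (((n:ℝ)+1)/(n:ℝ))) atTop (𝓝 1) := by
        have h0 : Tendsto (fun n : ℕ => 1 + 1/(n:ℝ)) atTop (𝓝 (1 + 0)) :=
          tendsto_const_nhds.add tendsto_one_div_atTop_nhds_zero_nat
        rw [add_zero] at h0
        apply h0.congr'
        filter_upwards [eventually_ge_atTop 1] with n hn
        have hn' : (0:ℝ) < n := by exact_mod_cast hn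
        field_simp
      have := (Complex.continuous_ofReal.tendsto 1).comp hr
      apply this.congr
      intro n
      simp [Function.comp]
    have t3 : Tendsto (fun n : ℕ => Complex.exp (z * ((rn n : ℝ) : ℂ))) atTop (𝓝 1) := by
      have h4 : Tendsto (fun n : ℕ => ((rn n : ℝ) : ℂ)) atTop (𝓝 0) := by
        have := (Complex.continuous_ofReal.tendsto 0).comp lgs_rn_tendsto
        apply this.congr
        intro n
        simp [Function.comp, hrn, hγdef]
      have h5 := (h4.const_mul z).cexp
      rw [mul_zero, Complex.exp_zero] at h5
      exact h5
    have := (t1.mul t2).mul t3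
    rw [mul_one, mul_one] at this
    exact this
  -- eventual equality
  have heq : ∀ᶠ n in atTop, Complex.exp (-(γ:ℂ)*z + ∑ k ∈ Finset.range (n+1), lgsF z k)
      = Complex.GammaSeq (1+z) n * (((n:ℂ)+1)/(n:ℂ)) * Complex.exp (z * ((rn n : ℝ) : ℂ)) := by
    filter_upwards [eventually_ge_atTop 1] with n hn
    have hnR : (0:ℝ) < n := by exact_mod_cast hn
    have hN : ((n:ℂ)) ≠ 0 := Nat.cast_ne_zero.mpr (by omega)
    set L : ℂ := ((Real.log n : ℝ) : ℂ) with hL'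
    have hexpL : Complex.exp L = (n:ℂ) := by
      rw [hL', ← Complex.ofReal_exp, Real.exp_log hnR]
      norm_cast
    set P : ℂ := ∏ k ∈ Finset.range (n+1), (1 + z / ((k:ℂ)+1)) with hP'
    have hPne : P ≠ 0 := Finset.prod_ne_zero_iff.mpr (fun k _ => lgs_ne z hz k)
    have hn1 : ((n:ℂ) + 1) ≠ 0 := by
      intro h
      have : ((n:ℝ) + 1) = 0 := by exact_mod_cast congrArg Complex.re h
      nlinarith
    set H : ℂ := ∑ k ∈ Finset.range (n+1), 1 / ((k:ℂ) + 1) with hH'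
    have hH : H = ((harmonic (n+1) : ℝ) : ℂ) := by
      rw [hH', harmonic]
      push_cast
      apply Finset.sum_congr rfl
      intro k _
      rw [one_div]
    have hcpow : (n:ℂ) ^ ((1:ℂ) + z) = Complex.exp L * Complex.exp (L * z) := by
      rw [Complex.cpow_def_of_ne_zero hN, hL', Complex.natCast_log, mul_one_add,
        Complex.exp_add]
    have hrnc : ((rn n : ℝ) : ℂ) = ((harmonic (n+1) : ℝ) : ℂ) - L - (γ:ℂ) := by
      rw [hrn, hL']
      push_cast
      ring
    have e1 : Complex.exp (-(γ:ℂ)*z + ∑ k ∈ Finset.range (n+1), lgsF z k)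
        = Complex.exp (-(γ:ℂ)*z + z * H) / P := by
      rw [Complex.exp_add, lgs_exp_partial z hz (n+1), ← hH', ← hP', mul_div_assoc',
        ← Complex.exp_add]
    rw [e1, lgs_gammaSeq_eq z hz n, ← hP', hcpow, hrnc, ← hH]
    rw [show z * (H - L - (γ:ℂ)) = z * H - z * L - (γ:ℂ) * z from by ring]
    rw [show -(γ:ℂ)*z + z*H = z*H - (γ:ℂ)*z from by ring]
    simp only [Complex.exp_sub]
    rw [mul_comm L z]
    rw [← hexpL]
    have e2 := Complex.exp_ne_zero (z*H)
    have e3 := Complex.exp_ne_zero ((γ:ℂ)*z)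
    have e4 := Complex.exp_ne_zero (z*L)
    have e5 := Complex.exp_ne_zero L
    have e6 : Complex.exp L + 1 ≠ 0 := by rw [hexpL]; exact hn1
    field_simp
  exact tendsto_nhds_unique (hL.congr' heq) hG


/-- For `|z| < 1`, `log Γ(1+z) = -γ z + ∑_{i=2}^∞ (-1)^i ζ(i) z^i / i`. -/
theorem log_gamma_series (z : ℂ) (hz : ‖z‖ < 1) :
    HasSum (fun i : ℕ => (-1) ^ (i + 2) * riemannZeta (i + 2) * z ^ (i + 2) / (i + 2))
      (Complex.log (Complex.Gamma (1 + z)) + (Real.eulerMascheroniConstant : ℂ) * z) := by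
  have hmain := lgs_main_hasSum z hz
  have hexp := lgs_exp z hz
  have him := lgs_im_bound z hz
  have hlog : Complex.log (Complex.Gamma (1 + z))
      = -(Real.eulerMascheroniConstant : ℂ) * z + ∑' k, lgsF z k := by
    rw [← hexp, Complex.log_exp]
    · linarith [(abs_lt.mp him).1]
    · linarith [(abs_lt.mp him).2]
  rw [hlog]
  convert hmain using 1
  ring
end

section
/- The coefficient of z^3 in the Taylor expansion of 1/Γ(1+z) at z = 0 equals γ³/6 - γζ(2)/2 + ζ(3)/3. -/
/-- The real zeta values `ζ(i) = ∑_{n≥1} n⁻ⁱ`. -/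
noncomputable def zetaVal (i : ℕ) : ℝ := ∑' n : ℕ, 1 / ((n : ℝ) + 1) ^ i

namespace InvGammaTaylor

open Real Filter Finset Topology

local notation "γ" => Real.eulerMascheroniConstant

noncomputable def t0 (k : ℕ) (z : ℝ) : ℝ := Real.log (1 + z / ((k : ℝ) + 1)) - z / ((k : ℝ) + 1)
noncomputable def t1 (k : ℕ) (z : ℝ) : ℝ := (z + ((k : ℝ) + 1))⁻¹ - ((k : ℝ) + 1)⁻¹
noncomputable def t2 (k : ℕ) (z : ℝ) : ℝ := -(((z + ((k : ℝ) + 1)) ^ 2)⁻¹)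
noncomputable def t3 (k : ℕ) (z : ℝ) : ℝ := 2 * ((z + ((k : ℝ) + 1)) ^ 3)⁻¹

noncomputable def S (z : ℝ) : ℝ := ∑' k : ℕ, t0 k z
noncomputable def S1 (z : ℝ) : ℝ := ∑' k : ℕ, t1 k z
noncomputable def S2 (z : ℝ) : ℝ := ∑' k : ℕ, t2 k z
noncomputable def S3 (z : ℝ) : ℝ := ∑' k : ℕ, t3 k z

def sdom : Set ℝ := Set.Ioo (-(1/2)) (1/2)

noncomputable def u (k : ℕ) : ℝ := 16 / ((k : ℝ) + 1) ^ 2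

lemma u_summable : Summable u := by
  have h : Summable (fun n : ℕ => 1 / (n : ℝ) ^ 2) := summable_one_div_nat_pow.mpr one_lt_two
  have h2 : Summable (fun n : ℕ => 1 / ((n : ℝ) + 1) ^ 2) := by
    have := (summable_nat_add_iff 1).mpr h
    simpa using this
  refine (h2.mul_left 16).congr fun k => ?_
  simp only [u]; ring

variable {z : ℝ}

lemma mem_imp (hz : z ∈ sdom) : |z| < 1/2 := abs_lt.mpr ⟨hz.1, hz.2⟩

lemma hk_pos (k : ℕ) : (0:ℝ) < (k : ℝ) + 1 := by positivity

lemma hzc_pos (hz : z ∈ sdom) (k : ℕ) : (1:ℝ)/2 ≤ z + ((k : ℝ) + 1) := by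
  have h1 : -(1/2) < z := hz.1
  have : (1:ℝ) ≤ (k : ℝ) + 1 := by exact_mod_cast Nat.one_le_iff_ne_zero.mpr (Nat.succ_ne_zero k)
  linarith

lemma factor_pos (hz : z ∈ sdom) (k : ℕ) : 0 < 1 + z / ((k : ℝ) + 1) := by
  have h1 : |z / ((k : ℝ) + 1)| ≤ |z| := by
    rw [abs_div]
    have : (1:ℝ) ≤ |(k : ℝ) + 1| := by
      rw [abs_of_pos (hk_pos k)]
      exact_mod_cast Nat.one_le_iff_ne_zero.mpr (Nat.succ_ne_zero k)
    calc |z| / |(k : ℝ) + 1| ≤ |z| / 1 := by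
          apply div_le_div_of_nonneg_left (abs_nonneg z) one_pos this |>.trans_eq rfl
      _ = |z| := div_one _
  have := mem_imp hz
  have := abs_lt.mp (h1.trans_lt this)
  linarith [this.1]

lemma hd0 (k : ℕ) (hz : z ∈ sdom) : HasDerivAt (t0 k) (t1 k z) z := by
  have hk := hk_pos k
  have h1 : HasDerivAt (fun z : ℝ => 1 + z / ((k : ℝ) + 1)) (((k : ℝ) + 1)⁻¹) z := by
    simpa [div_eq_mul_inv] using ((hasDerivAt_id z).div_const ((k : ℝ) + 1)).const_add 1
  have hpos := factor_pos hz k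
  have h2 := (Real.hasDerivAt_log hpos.ne').comp z h1
  have h3 : HasDerivAt (fun z : ℝ => z / ((k : ℝ) + 1)) (((k : ℝ) + 1)⁻¹) z := by
    simpa [div_eq_mul_inv] using (hasDerivAt_id z).div_const ((k : ℝ) + 1)
  have := h2.sub h3
  have he : (1 + z / ((k:ℝ)+1)) * (((k:ℝ)+1)) = z + ((k:ℝ)+1) := by
    rw [add_mul, one_mul, div_mul_cancel₀ _ hk.ne']; ring
  exact this.congr_deriv (by rw [t1, ← he, mul_inv])

lemma hd1 (k : ℕ) (hz : z ∈ sdom) : HasDerivAt (t1 k) (t2 k z) z := by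
  have hzc : (0:ℝ) < z + ((k : ℝ) + 1) := lt_of_lt_of_le (by norm_num) (hzc_pos hz k)
  have h1 : HasDerivAt (fun z : ℝ => z + ((k : ℝ) + 1)) 1 z := (hasDerivAt_id z).add_const _
  have := (h1.inv hzc.ne').sub_const (((k : ℝ) + 1)⁻¹)
  exact this.congr_deriv (by simp only [t2, neg_div, one_div])

lemma hd2 (k : ℕ) (hz : z ∈ sdom) : HasDerivAt (t2 k) (t3 k z) z := by
  have hzc : (0:ℝ) < z + ((k : ℝ) + 1) := lt_of_lt_of_le (by norm_num) (hzc_pos hz k)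
  have h1 : HasDerivAt (fun z : ℝ => (z + ((k : ℝ) + 1)) ^ 2) (2 * (z + ((k : ℝ) + 1))) z := by
    exact (((hasDerivAt_id z).add_const ((k : ℝ) + 1)).pow 2).congr_deriv (by norm_num)
  have := (h1.inv (by positivity)).neg
  exact this.congr_deriv (by rw [t3]; field_simp)

lemma bound_aux (hz : z ∈ sdom) (k : ℕ) : ((k : ℝ) + 1) / 2 ≤ z + ((k : ℝ) + 1) := by
  have h1 : -(1/2) < z := hz.1
  have : (1:ℝ) ≤ (k : ℝ) + 1 := by exact_mod_cast Nat.one_le_iff_ne_zero.mpr (Nat.succ_ne_zero k)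
  linarith

lemma b1 (k : ℕ) (hz : z ∈ sdom) : ‖t1 k z‖ ≤ u k := by
  have hk := hk_pos k
  have hzc : (0:ℝ) < z + ((k : ℝ) + 1) := lt_of_lt_of_le (by norm_num) (hzc_pos hz k)
  have key : t1 k z = -z / ((z + ((k : ℝ) + 1)) * ((k : ℝ) + 1)) := by
    unfold t1; field_simp; ring
  rw [Real.norm_eq_abs, key, abs_div, abs_neg]
  have hzb := (mem_imp hz).le
  have hden : ((k : ℝ) + 1) ^ 2 / 2 ≤ (z + ((k : ℝ) + 1)) * ((k : ℝ) + 1) := by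
    have := bound_aux hz k
    nlinarith [hk_pos k]
  have habs : |(z + ((k : ℝ) + 1)) * ((k : ℝ) + 1)| = (z + ((k : ℝ) + 1)) * ((k : ℝ) + 1) :=
    abs_of_pos (by positivity)
  rw [habs]
  calc |z| / ((z + ((k : ℝ) + 1)) * ((k : ℝ) + 1)) ≤ (1/2) / (((k : ℝ) + 1) ^ 2 / 2) := by
        apply div_le_div₀ (by norm_num) hzb (by positivity) hden
    _ ≤ u k := by
        unfold u
        rw [div_div_eq_mul_div, div_le_div_iff₀ (by positivity) (by positivity)]
        nlinarith [sq_nonneg ((k:ℝ)+1)]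

lemma b2 (k : ℕ) (hz : z ∈ sdom) : ‖t2 k z‖ ≤ u k := by
  have hzc : (0:ℝ) < z + ((k : ℝ) + 1) := lt_of_lt_of_le (by norm_num) (hzc_pos hz k)
  have hb := bound_aux hz k
  have hc1 : (1:ℝ) ≤ (k : ℝ) + 1 := by exact_mod_cast Nat.one_le_iff_ne_zero.mpr (Nat.succ_ne_zero k)
  rw [Real.norm_eq_abs, t2, abs_neg, abs_inv,
    abs_of_pos (by positivity : (0:ℝ) < (z + ((k : ℝ) + 1)) ^ 2)]
  have h : ((k : ℝ) + 1) ^ 2 / 4 ≤ (z + ((k : ℝ) + 1)) ^ 2 := by nlinarith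
  calc ((z + ((k : ℝ) + 1)) ^ 2)⁻¹ ≤ (((k : ℝ) + 1) ^ 2 / 4)⁻¹ := by gcongr
    _ ≤ u k := by
        rw [u, inv_div]
        gcongr <;> norm_num

lemma b3 (k : ℕ) (hz : z ∈ sdom) : ‖t3 k z‖ ≤ u k := by
  have hzc : (0:ℝ) < z + ((k : ℝ) + 1) := lt_of_lt_of_le (by norm_num) (hzc_pos hz k)
  have hb := bound_aux hz k
  have hc1 : (1:ℝ) ≤ (k : ℝ) + 1 := by exact_mod_cast Nat.one_le_iff_ne_zero.mpr (Nat.succ_ne_zero k)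
  have h3 : (((k : ℝ) + 1) / 2) ^ 3 ≤ (z + ((k : ℝ) + 1)) ^ 3 :=
    pow_le_pow_left₀ (by positivity) hb 3
  have h : ((k : ℝ) + 1) ^ 2 / 8 ≤ (z + ((k : ℝ) + 1)) ^ 3 := by nlinarith
  rw [Real.norm_eq_abs, t3, abs_of_pos (by positivity)]
  calc 2 * ((z + ((k : ℝ) + 1)) ^ 3)⁻¹ ≤ 2 * (((k : ℝ) + 1) ^ 2 / 8)⁻¹ := by gcongr
    _ = u k := by rw [u, inv_div]; ring

lemma sdom_open : IsOpen sdom := isOpen_Ioo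
lemma sdom_preconn : IsPreconnected sdom := (convex_Ioo _ _).isPreconnected
lemma zero_mem : (0:ℝ) ∈ sdom := by constructor <;> norm_num

lemma t0_zero (k : ℕ) : t0 k 0 = 0 := by simp [t0]
lemma t1_zero (k : ℕ) : t1 k 0 = 0 := by simp [t1]

lemma sum_t0_zero : Summable (fun k : ℕ => t0 k 0) := by
  simpa [t0_zero] using (summable_zero : Summable (fun _ : ℕ => (0:ℝ)))
lemma sum_t1_zero : Summable (fun k : ℕ => t1 k 0) := by
  simpa [t1_zero] using (summable_zero : Summable (fun _ : ℕ => (0:ℝ)))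
lemma sum_t2_zero : Summable (fun k : ℕ => t2 k 0) := by
  apply Summable.of_norm_bounded u_summable
  intro k
  exact b2 k zero_mem

lemma hS1 (hz : z ∈ sdom) : HasDerivAt S (S1 z) z :=
  hasDerivAt_tsum_of_isPreconnected u_summable sdom_open sdom_preconn
    (fun k y hy => hd0 k hy) (fun k y hy => b1 k hy) zero_mem sum_t0_zero hz

lemma hS2 (hz : z ∈ sdom) : HasDerivAt S1 (S2 z) z :=
  hasDerivAt_tsum_of_isPreconnected u_summable sdom_open sdom_preconn
    (fun k y hy => hd1 k hy) (fun k y hy => b2 k hy) zero_mem sum_t1_zero hz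

lemma hS3 (hz : z ∈ sdom) : HasDerivAt S2 (S3 z) z :=
  hasDerivAt_tsum_of_isPreconnected u_summable sdom_open sdom_preconn
    (fun k y hy => hd2 k hy) (fun k y hy => b3 k hy) zero_mem sum_t2_zero hz

lemma t0_summable (hz : z ∈ sdom) : Summable (fun k : ℕ => t0 k z) :=
  summable_of_summable_hasDerivAt_of_isPreconnected u_summable sdom_open sdom_preconn
    (fun k y hy => hd0 k hy) (fun k y hy => b1 k hy) zero_mem sum_t0_zero hz

lemma S_zero : S 0 = 0 := by simp [S, t0_zero]
lemma S1_zero : S1 0 = 0 := by simp [S1, t1_zero]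
lemma S2_zero : S2 0 = -zetaVal 2 := by
  rw [S2, zetaVal, ← tsum_neg]
  congr 1
  ext k
  simp [t2, one_div]
lemma S3_zero : S3 0 = 2 * zetaVal 3 := by
  rw [S3, zetaVal, ← tsum_mul_left]
  congr 1
  ext k
  simp [t3, one_div]

noncomputable def F (z : ℝ) : ℝ := Real.exp (γ * z + S z)

lemma F_zero : F 0 = 1 := by simp [F, S_zero]

lemma hF (hz : z ∈ sdom) : HasDerivAt F ((γ + S1 z) * F z) z := by
  have h1 : HasDerivAt (fun z : ℝ => γ * z + S z) (γ + S1 z) z := by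
    have := ((hasDerivAt_id z).const_mul γ).add (hS1 hz)
    simp only [mul_one] at this
    exact this
  have := h1.exp
  exact this.congr_deriv (by rw [F]; ring)


lemma claim_aux (hz : z ∈ sdom) (n : ℕ) (hn : 1 ≤ n) :
    (∏ k ∈ range (n+1), (1 + z / ((k:ℝ) + 1))) * (((n:ℝ)+1)) ^ (-z)
      = (Real.GammaSeq (1 + z) n)⁻¹ * ((n:ℝ)/((n:ℝ)+1)) ^ (1+z) := by
  have ha : (0:ℝ) < n := by exact_mod_cast hn
  have hb : (0:ℝ) < (n:ℝ) + 1 := by positivity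
  have hPpos : 0 < ∏ k ∈ range (n+1), (1 + z / ((k:ℝ) + 1)) :=
    Finset.prod_pos fun k _ => factor_pos hz k
  have hprod_fact : ∏ j ∈ range (n + 1), ((1 + z) + (j:ℝ))
      = ((Nat.factorial (n+1) : ℕ) : ℝ) * ∏ k ∈ range (n+1), (1 + z / ((k:ℝ) + 1)) := by
    have h1 : ∀ j ∈ range (n+1), (1 + z) + (j:ℝ) = ((j:ℝ) + 1) * (1 + z / ((j:ℝ) + 1)) := by
      intro j _
      have : ((j:ℝ) + 1) ≠ 0 := by positivity
      field_simp
      ring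
    rw [Finset.prod_congr rfl h1, Finset.prod_mul_distrib]
    congr 1
    exact_mod_cast Finset.prod_range_add_one_eq_factorial (n+1)
  rw [Real.GammaSeq, hprod_fact]
  rw [Real.div_rpow ha.le hb.le, Real.rpow_neg hb.le]
  have hb1 : ((n:ℝ)+1) ^ (1+z) = ((n:ℝ)+1) * ((n:ℝ)+1) ^ z := by
    rw [Real.rpow_add hb, Real.rpow_one]
  have hfs : ((Nat.factorial (n+1) : ℕ) : ℝ) = ((n:ℝ)+1) * ((Nat.factorial n : ℕ) : ℝ) := by
    push_cast [Nat.factorial_succ]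
    ring
  rw [hfs, hb1]
  have hapow : (0:ℝ) < (n:ℝ) ^ (1+z) := Real.rpow_pos_of_pos ha _
  have hbpow : (0:ℝ) < ((n:ℝ)+1) ^ z := Real.rpow_pos_of_pos hb _
  have hfac : (0:ℝ) < ((Nat.factorial n : ℕ) : ℝ) := by exact_mod_cast n.factorial_pos
  field_simp

lemma F_eq_inv_Gamma (hz : z ∈ sdom) : F z = 1 / Real.Gamma (1 + z) := by
  have hz1 : -(1/2:ℝ) < z := hz.1
  have hzpos : (0:ℝ) < 1 + z := by linarith
  have hGpos : 0 < Real.Gamma (1 + z) := Real.Gamma_pos_of_pos hzpos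
  set P : ℕ → ℝ := fun m => ∏ k ∈ range m, (1 + z / ((k:ℝ) + 1)) with hPdef
  have hA : Tendsto (fun m => Real.exp (γ * z + ∑ k ∈ range m, t0 k z)) atTop (𝓝 (F z)) := by
    have h1 : Tendsto (fun m => γ * z + ∑ k ∈ range m, t0 k z) atTop (𝓝 (γ * z + S z)) :=
      tendsto_const_nhds.add (t0_summable hz).hasSum.tendsto_sum_nat
    exact (Real.continuous_exp.tendsto _).comp h1
  have hfactor : ∀ m : ℕ, Real.exp (γ * z + ∑ k ∈ range m, t0 k z)
      = Real.exp (z * (γ - ∑ k ∈ range m, ((k:ℝ) + 1)⁻¹)) * P m := by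
    intro m
    have hlog : P m = Real.exp (∑ k ∈ range m, Real.log (1 + z / ((k:ℝ) + 1))) := by
      rw [Real.exp_sum]
      exact Finset.prod_congr rfl fun k _ => (Real.exp_log (factor_pos hz k)).symm
    rw [hlog, ← Real.exp_add]
    congr 1
    simp only [t0]
    rw [Finset.sum_sub_distrib]
    have h2 : ∑ k ∈ range m, z / ((k:ℝ) + 1) = z * ∑ k ∈ range m, ((k:ℝ) + 1)⁻¹ := by
      rw [Finset.mul_sum]
      exact Finset.sum_congr rfl fun k _ => div_eq_mul_inv z _
    rw [h2]
    ring
  have hH : ∀ m : ℕ, ∑ k ∈ range m, ((k:ℝ) + 1)⁻¹ = ((harmonic m : ℚ) : ℝ) := by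
    intro m
    rw [harmonic]
    push_cast
    rfl
  have hGinv : Tendsto (fun n => (Real.GammaSeq (1 + z) n)⁻¹) atTop
      (𝓝 (Real.Gamma (1 + z))⁻¹) :=
    (Real.GammaSeq_tendsto_Gamma (1 + z)).inv₀ hGpos.ne'
  have hc : Tendsto (fun m : ℕ => P m * ((m:ℝ)) ^ (-z)) atTop (𝓝 (Real.Gamma (1 + z))⁻¹) := by
    rw [← tendsto_add_atTop_iff_nat 1]
    have hfrac : Tendsto (fun n : ℕ => (n:ℝ) / ((n:ℝ) + 1)) atTop (𝓝 1) :=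
      tendsto_natCast_div_add_atTop (1:ℝ)
    have hpow : Tendsto (fun n : ℕ => ((n:ℝ) / ((n:ℝ) + 1)) ^ (1 + z)) atTop (𝓝 1) := by
      simpa using hfrac.rpow_const (Or.inl one_ne_zero)
    have hmul := hGinv.mul hpow
    rw [mul_one] at hmul
    apply hmul.congr'
    filter_upwards [eventually_ge_atTop 1] with n hn
    have := (claim_aux hz n hn).symm
    rw [this]
    push_cast
    rfl
  have hcorr : Tendsto (fun m : ℕ =>
      Real.exp (z * (γ - (((harmonic m : ℚ) : ℝ) - Real.log m)))) atTop (𝓝 1) := by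
    have h2 : Tendsto (fun m : ℕ => z * (γ - (((harmonic m : ℚ) : ℝ) - Real.log m))) atTop
        (𝓝 (z * (γ - γ))) := (tendsto_const_nhds.sub Real.tendsto_harmonic_sub_log).const_mul z
    have := (Real.continuous_exp.tendsto _).comp h2
    simpa [Function.comp_def] using this
  have hB : Tendsto (fun m => Real.exp (z * (γ - ∑ k ∈ range m, ((k:ℝ) + 1)⁻¹)) * P m) atTop
      (𝓝 (Real.Gamma (1 + z))⁻¹) := by
    have hmul := hcorr.mul hc
    rw [one_mul] at hmul
    apply hmul.congr'
    filter_upwards [eventually_ge_atTop 1] with m hm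
    have hm0 : (0:ℝ) < m := by exact_mod_cast hm
    rw [hH m]
    have hexp : ((m:ℝ)) ^ (-z) = Real.exp (-(z * Real.log m)) := by
      rw [Real.rpow_def_of_pos hm0]
      ring_nf
    rw [hexp, mul_comm (P m), ← mul_assoc, ← Real.exp_add]
    congr 2
    ring
  have hlim : Tendsto (fun m => Real.exp (γ * z + ∑ k ∈ range m, t0 k z)) atTop
      (𝓝 (Real.Gamma (1 + z))⁻¹) := hB.congr fun m => (hfactor m).symm
  rw [one_div]
  exact tendsto_nhds_unique hA hlim


lemma sdom_nhds : sdom ∈ 𝓝 (0:ℝ) := sdom_open.mem_nhds zero_mem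

noncomputable def G1 : ℝ → ℝ := fun z => (γ + S1 z) * F z
noncomputable def G2 : ℝ → ℝ := fun z => (S2 z + (γ + S1 z) ^ 2) * F z

lemma hG1 (hz : z ∈ sdom) : HasDerivAt G1 (G2 z) z := by
  have h := ((hS2 hz).const_add γ).mul (hF hz)
  exact h.congr_deriv (by show _ = (S2 z + (γ + S1 z) ^ 2) * F z; ring)

lemma hG2 (hz : z ∈ sdom) :
    HasDerivAt G2
      ((S3 z + 2 * (γ + S1 z) * S2 z + (S2 z + (γ + S1 z) ^ 2) * (γ + S1 z)) * F z) z := by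
  have hp : HasDerivAt (fun z => (γ + S1 z) ^ 2) (2 * (γ + S1 z) * S2 z) z := by
    have := ((hS2 hz).const_add γ).pow 2
    exact this.congr_deriv (by norm_num)
  have h1 : HasDerivAt (fun z => S2 z + (γ + S1 z) ^ 2) (S3 z + 2 * (γ + S1 z) * S2 z) z :=
    (hS3 hz).add hp
  have := h1.mul (hF hz)
  exact this.congr_deriv (by ring)

lemma deriv_F_eq (hz : z ∈ sdom) : deriv F z = G1 z := (hF hz).deriv

lemma deriv2_F_eq (hz : z ∈ sdom) : deriv (deriv F) z = G2 z := by
  have h : deriv F =ᶠ[𝓝 z] G1 := by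
    filter_upwards [sdom_open.mem_nhds hz] with y hy
    exact deriv_F_eq hy
  rw [h.deriv_eq]
  exact (hG1 hz).deriv

lemma deriv3_F_zero :
    deriv (deriv (deriv F)) 0 =
      S3 0 + 2 * γ * S2 0 + (S2 0 + γ ^ 2) * γ := by
  have h : deriv (deriv F) =ᶠ[𝓝 (0:ℝ)] G2 := by
    filter_upwards [sdom_nhds] with y hy
    exact deriv2_F_eq hy
  rw [h.deriv_eq, (hG2 zero_mem).deriv, S1_zero, F_zero]
  ring

lemma main :
    iteratedDeriv 3 (fun z : ℝ => 1 / Real.Gamma (1 + z)) 0 / (Nat.factorial 3 : ℝ) =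
      Real.eulerMascheroniConstant ^ 3 / 6
        - Real.eulerMascheroniConstant * zetaVal 2 / 2 + zetaVal 3 / 3 := by
  have h0 : (fun z : ℝ => 1 / Real.Gamma (1 + z)) =ᶠ[𝓝 (0:ℝ)] F := by
    filter_upwards [sdom_nhds] with y hy
    exact (F_eq_inv_Gamma hy).symm
  have hd : iteratedDeriv 3 (fun z : ℝ => 1 / Real.Gamma (1 + z)) 0
      = deriv (deriv (deriv F)) 0 := by
    have h3 := h0.deriv.deriv.deriv
    rw [show (3:ℕ) = 2+1 from rfl, iteratedDeriv_succ, show (2:ℕ) = 1+1 from rfl,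
      iteratedDeriv_succ, iteratedDeriv_one]
    exact h3.eq_of_nhds
  rw [hd, deriv3_F_zero, S2_zero, S3_zero]
  norm_num [Nat.factorial]
  ring

end InvGammaTaylor


/-- The coefficient of `z³` in the Taylor expansion of `1/Γ(1+z)` at `0` equals
`γ³/6 - γ ζ(2)/2 + ζ(3)/3`. -/
theorem taylor_coeff_three_of_inv_gamma :
    iteratedDeriv 3 (fun z : ℝ => 1 / Real.Gamma (1 + z)) 0 / (Nat.factorial 3 : ℝ) =
      Real.eulerMascheroniConstant ^ 3 / 6
        - Real.eulerMascheroniConstant * zetaVal 2 / 2 + zetaVal 3 / 3 :=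
  InvGammaTaylor.main
end
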